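/- For k ≥ 2, the edge connectivity of every Nash equilibrium network in the avg-flowNCG is at least k. -/

import Mathlib

/-!
Suppose `λ := edgeConn (cap b) < k`. In equilibrium every agent spends its whole budget, since
one more unit bought towards any `w` raises `λ(v, w)` and lowers nothing. Take a minimum cut
side `A` of least cardinality and an inclusion-minimal minimum cut side `C ⊆ Aᶜ`; then
`|A| ≤ |C|`, and by submodularity any two vertices of `A`, or of `C`, are joined by more than
`λ`. An agent `v ∈ A` spends `k > λ`, more than what leaves `A`, so it owns an edge `va` inside
`A`. Moving one unit from `va` to `vw` with `w ∈ C` costs every vertex at most one, costs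
nothing outside `A`, and by posimodularity gains one at every vertex of `C`: the total
connectivity of `v` grows by at least `|C| - (|A| - 1) > 0`, contradicting equilibrium.
-/

open Finset

noncomputable section

/-- Total capacity crossing the cut `(A, Aᶜ)`: each unordered crossing pair
is counted once (for symmetric capacities). -/
def cutCap {V : Type*} [Fintype V] [DecidableEq V] (c : V → V → ℕ) (A : Finset V) : ℕ :=
  ∑ u ∈ A, ∑ v ∈ Aᶜ, c u v

/-- Local edge connectivity between `v` and `w`: the minimum capacity of a cut
separating `v` from `w`. -/
def localConn {V : Type*} [Fintype V] [DecidableEq V] (c : V → V → ℕ) (v w : V) : ℕ :=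
  sInf {m | ∃ A : Finset V, v ∈ A ∧ w ∉ A ∧ cutCap c A = m}

/-- Edge connectivity of the capacitated graph: the minimum capacity of a
nontrivial cut. -/
def edgeConn {V : Type*} [Fintype V] [DecidableEq V] (c : V → V → ℕ) : ℕ :=
  sInf {m | ∃ A : Finset V, A.Nonempty ∧ A ≠ Finset.univ ∧ cutCap c A = m}

/-- Weighted degree of a vertex: sum of capacities of incident edges. -/
def wdeg {V : Type*} [Fintype V] [DecidableEq V] (c : V → V → ℕ) (v : V) : ℕ :=
  ∑ w, c v w

/-- The undirected capacity induced by the bought (directed) capacities `b`. -/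
def cap {V : Type*} (b : V → V → ℕ) : V → V → ℕ := fun u v => b u v + b v u

/-- A strategy profile is feasible for budget `k` if nobody buys a self-loop
and each agent's total bought capacity is at most `k`. -/
def Feasible {V : Type*} [Fintype V] (k : ℕ) (b : V → V → ℕ) : Prop :=
  ∀ v, b v v = 0 ∧ ∑ w, b v w ≤ k

/-- Utility of agent `v` in the min-flowNCG: the lexicographic pair of the
edge connectivity of the network and the number of well-connected nodes. -/
def minUtil {V : Type*} [Fintype V] [DecidableEq V] (b : V → V → ℕ) (v : V) : ℕ × ℕ :=
  (edgeConn (cap b),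
    Set.ncard {w | w ≠ v ∧ edgeConn (cap b) < localConn (cap b) v w})

/-- Nash equilibrium of the min-flowNCG: the profile is feasible and no agent
can strictly lexicographically improve its utility by a unilateral deviation. -/
def MinNE {V : Type*} [Fintype V] [DecidableEq V] (k : ℕ) (b : V → V → ℕ) : Prop :=
  Feasible k b ∧ ∀ (v : V) (s : V → ℕ), s v = 0 → (∑ w, s w) ≤ k →
    ¬ Prod.Lex (· < ·) (· < ·) (minUtil b v) (minUtil (Function.update b v s) v)

/-- Utility of agent `v` in the avg-flowNCG: the average local edge
connectivity (max-flow value) from `v` to every other node. -/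
def avgUtil {V : Type*} [Fintype V] [DecidableEq V] (b : V → V → ℕ) (v : V) : ℚ :=
  (∑ w ∈ Finset.univ.erase v, (localConn (cap b) v w : ℚ)) / ((Fintype.card V : ℚ) - 1)

/-- Nash equilibrium of the avg-flowNCG: the profile is feasible and no agent
can strictly increase its utility by a unilateral deviation. -/
def AvgNE {V : Type*} [Fintype V] [DecidableEq V] (k : ℕ) (b : V → V → ℕ) : Prop :=
  Feasible k b ∧ ∀ (v : V) (s : V → ℕ), s v = 0 → (∑ w, s w) ≤ k →
    avgUtil (Function.update b v s) v ≤ avgUtil b v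

section Cuts

variable {V : Type*} [Fintype V] [DecidableEq V]

lemma cutCap_eq_sum_ite (c : V → V → ℕ) (A : Finset V) :
    cutCap c A = ∑ u, ∑ w, if u ∈ A ∧ w ∉ A then c u w else 0 := by
  simp only [cutCap, ite_and, sum_ite_irrel, sum_const_zero, ← sum_filter,
    ← mem_compl, filter_mem_eq_inter, univ_inter]

lemma cutCap_compl {c : V → V → ℕ} (hc : ∀ x y, c x y = c y x) (A : Finset V) :
    cutCap c Aᶜ = cutCap c A := by
  rw [cutCap, cutCap, compl_compl, sum_comm]
  exact sum_congr rfl fun u _ => sum_congr rfl fun w _ => hc w u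

lemma cutCap_inter_add_cutCap_union_le (c : V → V → ℕ) (A B : Finset V) :
    cutCap c (A ∩ B) + cutCap c (A ∪ B) ≤ cutCap c A + cutCap c B := by
  simp only [cutCap_eq_sum_ite, ← sum_add_distrib]
  refine sum_le_sum fun u _ => sum_le_sum fun w _ => ?_
  by_cases hA : u ∈ A <;> by_cases hB : u ∈ B <;> by_cases kA : w ∈ A <;> by_cases kB : w ∈ B <;>
    simp [hA, hB, kA, kB]

lemma cutCap_sdiff_add_cutCap_sdiff_le {c : V → V → ℕ} (hc : ∀ x y, c x y = c y x)
    (A B : Finset V) : cutCap c (A \ B) + cutCap c (B \ A) ≤ cutCap c A + cutCap c B := by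
  have h := cutCap_inter_add_cutCap_union_le c A Bᶜ
  have hunion : A ∪ Bᶜ = (B \ A)ᶜ := by ext; simp [or_comm, imp_iff_not_or]
  rwa [cutCap_compl hc B, ← sdiff_eq_inter_compl, hunion, cutCap_compl hc] at h

end Cuts

section Connectivity

variable {V : Type*} [Fintype V] [DecidableEq V] {c : V → V → ℕ}

lemma localConn_le_cutCap (c : V → V → ℕ) {v w : V} {S : Finset V} (hv : v ∈ S) (hw : w ∉ S) :
    localConn c v w ≤ cutCap c S :=
  Nat.sInf_le ⟨S, hv, hw, rfl⟩

lemma exists_cutCap_eq_localConn (c : V → V → ℕ) {v w : V} (hwv : w ≠ v) :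
    ∃ S : Finset V, v ∈ S ∧ w ∉ S ∧ cutCap c S = localConn c v w := by
  have hne : {m | ∃ S : Finset V, v ∈ S ∧ w ∉ S ∧ cutCap c S = m}.Nonempty :=
    ⟨_, {v}, mem_singleton_self v, by simpa using hwv, rfl⟩
  exact Nat.sInf_mem hne

lemma le_localConn {v w : V} {m : ℕ} (hwv : w ≠ v)
    (h : ∀ S : Finset V, v ∈ S → w ∉ S → m ≤ cutCap c S) : m ≤ localConn c v w := by
  obtain ⟨S, hv, hw, hS⟩ := exists_cutCap_eq_localConn c hwv
  exact hS ▸ h S hv hw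

lemma localConn_add_le_localConn {c c' : V → V → ℕ} {v x : V} {d : ℕ} (hxv : x ≠ v)
    (h : ∀ S : Finset V, v ∈ S → x ∉ S → cutCap c S + d ≤ cutCap c' S) :
    localConn c v x + d ≤ localConn c' v x :=
  le_localConn hxv fun S hv hx => by
    have := localConn_le_cutCap c hv hx
    have := h S hv hx
    omega

lemma edgeConn_le_cutCap (c : V → V → ℕ) {S : Finset V} (hS : S.Nonempty) (hS' : S ≠ univ) :
    edgeConn c ≤ cutCap c S :=
  Nat.sInf_le ⟨S, hS, hS', rfl⟩

lemma edgeConn_le_cutCap_of_mem_of_not_mem (c : V → V → ℕ) {v w : V} {S : Finset V}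
    (hv : v ∈ S) (hw : w ∉ S) : edgeConn c ≤ cutCap c S :=
  edgeConn_le_cutCap c ⟨v, hv⟩ (ne_of_mem_of_not_mem' (mem_univ w) hw).symm

def IsMinCut (c : V → V → ℕ) (S : Finset V) : Prop :=
  S.Nonempty ∧ S ≠ univ ∧ cutCap c S = edgeConn c

lemma isMinCut_of_cutCap_le {v w : V} {S : Finset V} (hv : v ∈ S) (hw : w ∉ S)
    (h : cutCap c S ≤ edgeConn c) : IsMinCut c S :=
  ⟨⟨v, hv⟩, (ne_of_mem_of_not_mem' (mem_univ w) hw).symm,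
    h.antisymm (edgeConn_le_cutCap_of_mem_of_not_mem c hv hw)⟩

lemma exists_isMinCut [Nontrivial V] (c : V → V → ℕ) : ∃ S, IsMinCut c S := by
  obtain ⟨v, w, hvw⟩ := exists_pair_ne V
  have hne : {m | ∃ A : Finset V, A.Nonempty ∧ A ≠ univ ∧ cutCap c A = m}.Nonempty :=
    ⟨_, {v}, singleton_nonempty v,
      (ne_of_mem_of_not_mem' (mem_univ w) (by simpa using hvw.symm)).symm, rfl⟩
  obtain ⟨S, hS, hS', h⟩ := Nat.sInf_mem hne
  exact ⟨S, hS, hS', h⟩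

lemma IsMinCut.compl (hc : ∀ x y, c x y = c y x) {S : Finset V} (hS : IsMinCut c S) :
    IsMinCut c Sᶜ :=
  ⟨(compl_ne_univ_iff_nonempty Sᶜ).1 (by rw [compl_compl]; exact hS.2.1),
    (compl_ne_univ_iff_nonempty S).2 hS.1, (cutCap_compl hc S).trans hS.2.2⟩

lemma exists_minimal_isMinCut_pair [Nontrivial V] (hc : ∀ x y, c x y = c y x) :
    ∃ A C : Finset V, Minimal (IsMinCut c) A ∧ Minimal (IsMinCut c) C ∧ C ⊆ Aᶜ ∧
      A.card ≤ C.card := by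
  obtain ⟨A, hA, hAmin⟩ := exists_minimalFor_of_wellFoundedLT (IsMinCut c) card
    (exists_isMinCut c)
  obtain ⟨C, hCA, hC⟩ := exists_minimal_le_of_wellFoundedLT (IsMinCut c) Aᶜ (hA.compl hc)
  refine ⟨A, C, ⟨hA, fun D hD hDA => ?_⟩, hC, hCA, ?_⟩
  · exact (eq_of_subset_of_card_le hDA (hAmin hD (card_le_card hDA))).symm.le
  · by_contra! h
    exact h.not_ge (hAmin hC.prop h.le)

/-- A cheapest cut separating two vertices of `M` would, by submodularity, cut out a smaller
side. -/
lemma Minimal.edgeConn_lt_localConn (hc : ∀ x y, c x y = c y x) {M : Finset V}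
    (hM : Minimal (IsMinCut c) M) {x y : V} (hx : x ∈ M) (hy : y ∈ M) (hxy : y ≠ x) :
    edgeConn c < localConn c x y := by
  by_contra! hle
  obtain ⟨S, hxS, hyS, hS⟩ := exists_cutCap_eq_localConn c hxy
  have hSmin : IsMinCut c S := isMinCut_of_cutCap_le hxS hyS (hS ▸ hle)
  by_cases hSM : S ∪ M = univ
  · have hSc : Sᶜ ⊆ M := fun z hz =>
      (mem_union.1 (hSM ▸ mem_univ z)).resolve_left (mem_compl.1 hz)
    have := hM.eq_of_le (hSmin.compl hc) hSc
    exact mem_compl.1 (this ▸ hx) hxS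
  · have hsub := cutCap_inter_add_cutCap_union_le c S M
    have hinter := edgeConn_le_cutCap_of_mem_of_not_mem c (mem_inter.2 ⟨hxS, hx⟩)
      (fun h => hyS (mem_inter.1 h).1)
    have hunion := edgeConn_le_cutCap c ⟨x, mem_union_left M hxS⟩ hSM
    have heq := hM.eq_of_le (isMinCut_of_cutCap_le (mem_inter.2 ⟨hxS, hx⟩)
      (fun h => hyS (mem_inter.1 h).1) (by rw [hSmin.2.2, hM.prop.2.2] at hsub; omega))
      inter_subset_right
    exact hyS (mem_inter.1 (heq ▸ hy)).1

end Connectivity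

lemma cap_symm {V : Type*} (b : V → V → ℕ) (x y : V) : cap b x y = cap b y x :=
  add_comm _ _

section Deviation

variable {V : Type*} [Fintype V] [DecidableEq V]

lemma cutCap_cap_update (b : V → V → ℕ) (s : V → ℕ) {v : V} {S : Finset V} (hv : v ∈ S) :
    cutCap (cap (Function.update b v s)) S + ∑ w ∈ Sᶜ, b v w =
      cutCap (cap b) S + ∑ w ∈ Sᶜ, s w := by
  have hrest : ∀ u ∈ S.erase v, ∑ w ∈ Sᶜ, cap (Function.update b v s) u w =
      ∑ w ∈ Sᶜ, cap b u w := fun u hu => sum_congr rfl fun w hw => by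
    have hwv : w ≠ v := (ne_of_mem_of_not_mem hv (mem_compl.1 hw)).symm
    simp [cap, Function.update_of_ne (ne_of_mem_erase hu), Function.update_of_ne hwv]
  have hhead : ∀ w ∈ Sᶜ, cap (Function.update b v s) v w + b v w = cap b v w + s w :=
    fun w hw => by
      have hwv : w ≠ v := (ne_of_mem_of_not_mem hv (mem_compl.1 hw)).symm
      simp only [cap, Function.update_self, Function.update_of_ne hwv]
      ring
  rw [cutCap, cutCap, ← add_sum_erase S _ hv, ← add_sum_erase S _ hv, sum_congr rfl hrest,
    add_right_comm, ← sum_add_distrib, sum_congr rfl hhead, sum_add_distrib, add_right_comm]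

/-- On every cut side containing `v`, `c'` looks like `c` with one unit of capacity moved from
the edge `{v, a}` to the edge `{v, w}`. -/
def IsUnitMove (c c' : V → V → ℕ) (v a w : V) : Prop :=
  ∀ S : Finset V, v ∈ S →
    cutCap c' S + (if a ∈ Sᶜ then 1 else 0) = cutCap c S + (if w ∈ Sᶜ then 1 else 0)

variable {c c' : V → V → ℕ} {v a w x : V}

lemma localConn_le_localConn_add_one_of_isUnitMove (hxv : x ≠ v)
    (hmove : IsUnitMove c c' v a w) :
    localConn c v x ≤ localConn c' v x + 1 := by
  obtain ⟨S, hv, hx, hS⟩ := exists_cutCap_eq_localConn c' hxv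
  have h := hmove S hv
  have := localConn_le_cutCap c hv hx
  split_ifs at h <;> omega

lemma edgeConn_le_localConn_of_isUnitMove (hxv : x ≠ v)
    (hmove : IsUnitMove c c' v a w)
    (ha : edgeConn c < localConn c v a) : edgeConn c ≤ localConn c' v x :=
  le_localConn hxv fun S hv hx => by
    have h := hmove S hv
    have := edgeConn_le_cutCap_of_mem_of_not_mem c hv hx
    by_cases haS : a ∈ S
    · simp only [mem_compl, haS, not_true, if_false] at h
      split_ifs at h <;> omega
    · have := localConn_le_cutCap c hv haS
      split_ifs at h <;> omega

lemma edgeConn_lt_localConn_of_isUnitMove (hc : ∀ x y, c x y = c y x)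
    (hmove : IsUnitMove c c' v a w)
    (ha : edgeConn c < localConn c v a) {C : Finset V} (hC : Minimal (IsMinCut c) C)
    (hvC : v ∉ C) (hw : w ∈ C) (hx : x ∈ C) : edgeConn c < localConn c' v x :=
  le_localConn (ne_of_mem_of_not_mem hx hvC) fun S hvS hxS => by
    have h := hmove S hvS
    by_cases haS : a ∈ S <;> by_cases hwS : w ∈ S
    · have := localConn_le_cutCap c hwS hxS
      have := hC.edgeConn_lt_localConn hc hw hx (ne_of_mem_of_not_mem hwS hxS).symm
      simp only [mem_compl, haS, hwS, not_true, if_false] at h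
      omega
    · have := edgeConn_le_cutCap_of_mem_of_not_mem c hvS hxS
      simp only [mem_compl, haS, hwS, not_true, not_false_eq_true, if_false, if_true] at h
      omega
    · -- by posimodularity, since `C \ S` and `S \ C` both cost more than `edgeConn c`
      have hposi := cutCap_sdiff_add_cutCap_sdiff_le hc C S
      have := localConn_le_cutCap c (mem_sdiff.2 ⟨hx, hxS⟩) (fun h => (mem_sdiff.1 h).2 hwS)
      have := hC.edgeConn_lt_localConn hc hx hw (ne_of_mem_of_not_mem hwS hxS)
      have := localConn_le_cutCap c (mem_sdiff.2 ⟨hvS, hvC⟩) (fun h => haS (mem_sdiff.1 h).1)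
      rw [hC.prop.2.2] at hposi
      simp only [mem_compl, haS, hwS, not_true, not_false_eq_true, if_false, if_true] at h
      omega
    · have := localConn_le_cutCap c hvS haS
      simp only [mem_compl, haS, hwS, not_false_eq_true, if_true] at h
      omega

end Deviation

section Equilibrium

variable {V : Type*} [Fintype V] [DecidableEq V]

lemma sum_erase_lt_sum_erase {f g : V → ℕ} {A C : Finset V} {v : V} (hv : v ∈ A)
    (hCA : C ⊆ Aᶜ) (hcard : A.card ≤ C.card) (hA : ∀ x ∈ A.erase v, f x ≤ g x + 1)
    (hAc : ∀ x ∈ Aᶜ, f x ≤ g x) (hC : ∀ x ∈ C, f x < g x) :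
    ∑ x ∈ univ.erase v, f x < ∑ x ∈ univ.erase v, g x := by
  have hsplit : ∀ h : V → ℕ, ∑ x ∈ univ.erase v, h x = ∑ x ∈ A.erase v, h x + ∑ x ∈ Aᶜ, h x :=
    fun h => by
      have := sum_add_sum_compl A h
      rw [← add_sum_erase A h hv, ← add_sum_erase univ h (mem_univ v)] at this
      omega
  have hlossA : ∑ x ∈ A.erase v, f x ≤ ∑ x ∈ A.erase v, g x + (A.card - 1) := by
    simpa [sum_add_distrib, card_erase_of_mem hv] using sum_le_sum hA
  have hgainC : ∑ x ∈ C, f x + C.card ≤ ∑ x ∈ C, g x := by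
    simpa [sum_add_distrib] using sum_le_sum fun x hx => Nat.succ_le_of_lt (hC x hx)
  have hAc' : ∑ x ∈ Aᶜ \ C, f x ≤ ∑ x ∈ Aᶜ \ C, g x :=
    sum_le_sum fun x hx => hAc x (mem_sdiff.1 hx).1
  have hA1 : 1 ≤ A.card := card_pos.2 ⟨v, hv⟩
  rw [hsplit f, hsplit g, ← sum_sdiff hCA, ← sum_sdiff hCA (f := g)]
  omega

lemma sum_localConn_lt_of_isUnitMove {c c' : V → V → ℕ} (hc : ∀ x y, c x y = c y x)
    {A C : Finset V} (hA : Minimal (IsMinCut c) A) (hC : Minimal (IsMinCut c) C)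
    (hCA : C ⊆ Aᶜ) (hcard : A.card ≤ C.card) {v a w : V} (hv : v ∈ A) (ha : a ∈ A)
    (hav : a ≠ v) (hw : w ∈ C) (hmove : IsUnitMove c c' v a w) :
    ∑ x ∈ univ.erase v, localConn c v x < ∑ x ∈ univ.erase v, localConn c' v x := by
  have hva := hA.edgeConn_lt_localConn hc hv ha hav
  have hvC : v ∉ C := fun h => mem_compl.1 (hCA h) hv
  have hbeyond : ∀ x ∈ Aᶜ, localConn c v x ≤ edgeConn c := fun x hx =>
    hA.prop.2.2 ▸ localConn_le_cutCap c hv (mem_compl.1 hx)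
  refine sum_erase_lt_sum_erase hv hCA hcard (fun x hx => ?_) (fun x hx => ?_) (fun x hx => ?_)
  · exact localConn_le_localConn_add_one_of_isUnitMove (ne_of_mem_erase hx) hmove
  · exact (hbeyond x hx).trans (edgeConn_le_localConn_of_isUnitMove
      (ne_of_mem_of_not_mem hv (mem_compl.1 hx)).symm hmove hva)
  · exact (hbeyond x (hCA hx)).trans_lt
      (edgeConn_lt_localConn_of_isUnitMove hc hmove hva hC hvC hw hx)

lemma exists_isUnitMove {b : V → V → ℕ} {v a w : V} (hbvv : b v v = 0) (hba : b v a ≠ 0)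
    (haw : a ≠ w) (hwv : w ≠ v) :
    ∃ s : V → ℕ, s v = 0 ∧ ∑ x, s x = ∑ x, b v x ∧
      IsUnitMove (cap b) (cap (Function.update b v s)) v a w := by
  have hle : Pi.single a 1 ≤ b v + Pi.single w 1 := fun x => by
    by_cases hx : x = a
    · subst hx; simp [Pi.single_eq_of_ne haw, Nat.one_le_iff_ne_zero.2 hba]
    · simp [Pi.single_eq_of_ne hx]
  set s := b v + Pi.single w 1 - Pi.single a 1
  have hs : s + Pi.single a 1 = b v + Pi.single w 1 := tsub_add_cancel_of_le hle
  have hsum : ∀ T : Finset V, ∑ x ∈ T, s x + (if a ∈ T then 1 else 0) =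
      ∑ x ∈ T, b v x + (if w ∈ T then 1 else 0) := fun T => by
    simpa [sum_add_distrib] using congrArg (fun f => ∑ x ∈ T, f x) hs
  refine ⟨s, ?_, by simpa using hsum univ, fun S hv => ?_⟩
  · have h := congrFun hs v
    simp only [Pi.add_apply, hbvv, Pi.single_eq_of_ne hwv.symm, add_zero, add_eq_zero] at h
    exact h.1
  · have := cutCap_cap_update b s hv
    have := hsum Sᶜ
    omega

lemma exists_mem_ne_zero_of_cutCap_lt {b : V → V → ℕ} {v : V} {A : Finset V} (hv : v ∈ A)
    (h : cutCap (cap b) A < ∑ x, b v x) : ∃ a ∈ A, b v a ≠ 0 := by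
  have hout : ∑ x ∈ Aᶜ, b v x ≤ cutCap (cap b) A :=
    calc ∑ x ∈ Aᶜ, b v x ≤ ∑ x ∈ Aᶜ, cap b v x := sum_le_sum fun x _ => Nat.le_add_right _ _
      _ ≤ cutCap (cap b) A :=
        single_le_sum (f := fun u => ∑ x ∈ Aᶜ, cap b u x) (fun _ _ => Nat.zero_le _) hv
  apply exists_ne_zero_of_sum_ne_zero
  have := sum_add_sum_compl A (b v)
  omega

variable {k : ℕ} {b : V → V → ℕ}

lemma AvgNE.sum_localConn_update_le (hne : AvgNE k b) (hn : 2 ≤ Fintype.card V) {v : V}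
    {s : V → ℕ} (hs0 : s v = 0) (hsk : ∑ w, s w ≤ k) :
    ∑ w ∈ univ.erase v, localConn (cap (Function.update b v s)) v w ≤
      ∑ w ∈ univ.erase v, localConn (cap b) v w := by
  have hpos : (0 : ℚ) < Fintype.card V - 1 := by
    have : (2 : ℚ) ≤ Fintype.card V := by exact_mod_cast hn
    linarith
  have h := hne.2 v s hs0 hsk
  rw [avgUtil, avgUtil, div_le_div_iff_of_pos_right hpos] at h
  exact_mod_cast h

/-- An agent with budget to spare could buy one more unit of capacity towards anybody. -/
lemma AvgNE.sum_eq_budget (hne : AvgNE k b) (hn : 2 ≤ Fintype.card V) (v : V) :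
    ∑ w, b v w = k := by
  have : Nontrivial V := Fintype.one_lt_card_iff_nontrivial.1 hn
  obtain ⟨w, hwv⟩ := exists_ne v
  refine (hne.1 v).2.antisymm (not_lt.1 fun hlt => ?_)
  set s := b v + Pi.single w 1
  have hs0 : s v = 0 := by simp [s, (hne.1 v).1, Pi.single_eq_of_ne hwv.symm]
  have hcut : ∀ S : Finset V, v ∈ S → cutCap (cap b) S + (if w ∈ Sᶜ then 1 else 0) =
      cutCap (cap (Function.update b v s)) S := fun S hv => by
    have hsS : ∑ x ∈ Sᶜ, s x = ∑ x ∈ Sᶜ, b v x + (if w ∈ Sᶜ then 1 else 0) := by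
      simp [s, sum_add_distrib]
    have := cutCap_cap_update b s hv
    omega
  refine (hne.sum_localConn_update_le hn hs0 ?_).not_gt (sum_lt_sum (fun x hx => ?_) ?_)
  · simpa [s, sum_add_distrib] using hlt
  · exact localConn_add_le_localConn (d := 0) (ne_of_mem_erase hx) fun S hv _ =>
      (hcut S hv).symm ▸ Nat.le_add_right _ _
  · refine ⟨w, mem_erase.2 ⟨hwv, mem_univ w⟩,
      Nat.lt_of_succ_le (localConn_add_le_localConn (d := 1) hwv fun S hv hw => ?_)⟩
    simpa [hw] using (hcut S hv).le

end Equilibrium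

theorem avgNE_edgeConn_ge_general {V : Type*} [Fintype V] [DecidableEq V]
    (k : ℕ) (b : V → V → ℕ)
    (hk : k < Fintype.card V)
    (hne : AvgNE k b) :
    k ≤ edgeConn (cap b) := by
  by_contra! hlt
  have hn : 2 ≤ Fintype.card V := by omega
  have : Nontrivial V := Fintype.one_lt_card_iff_nontrivial.1 hn
  obtain ⟨A, C, hA, hC, hCA, hcard⟩ := exists_minimal_isMinCut_pair (cap_symm b)
  obtain ⟨v, hv⟩ := hA.prop.1
  obtain ⟨w, hw⟩ := hC.prop.1
  have hwA : w ∉ A := mem_compl.1 (hCA hw)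
  -- `v` spends `k`, more than the capacity leaving `A`, so it buys an edge inside `A`
  obtain ⟨a, ha, hba⟩ := exists_mem_ne_zero_of_cutCap_lt hv
    (hA.prop.2.2 ▸ hne.sum_eq_budget hn v ▸ hlt)
  have hav : a ≠ v := fun h => hba (h ▸ (hne.1 v).1)
  obtain ⟨s, hs0, hsum, hmove⟩ := exists_isUnitMove (hne.1 v).1 hba
    (ne_of_mem_of_not_mem ha hwA) (ne_of_mem_of_not_mem hv hwA).symm
  exact (hne.sum_localConn_update_le hn hs0 (hsum ▸ (hne.1 v).2)).not_gt
    (sum_localConn_lt_of_isUnitMove (cap_symm b) hA hC hCA hcard hv ha hav hw hmove)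

/-- For `k ≥ 2`, the edge connectivity of every Nash equilibrium network in
the avg-flowNCG is at least `k`. -/
theorem avgNE_edgeConn_ge {V : Type*} [Fintype V] [DecidableEq V]
    (k : ℕ) (b : V → V → ℕ)
    (hk2 : 2 ≤ k) (hk : k < Fintype.card V)
    (hne : AvgNE k b) :
    k ≤ edgeConn (cap b) :=
  avgNE_edgeConn_ge_general k b hk hne
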